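/- arXiv:2208.14354 — 3 statements merged into one kernel-verified Lean document; each statement's English description precedes it below -/
import Mathlib

section
/- If x, y, z are coprime positive integers with x > 1, z > 1 and x^n + y^n = z^n for a positive integer n, and if z^n ≤ (xyz)^2, then n ≤ 5. -/
/-- WEABC with ε = 1, K = 1 implies Fermat's Last Theorem for n ≥ 6. -/
theorem fermat_from_weabc (x y z n : ℕ) (hx : 1 < x) (hy : 0 < y) (hz : 1 < z)
    (hn : 0 < n)
    (hxy : Nat.Coprime x y) (hxz : Nat.Coprime x z) (hyz : Nat.Coprime y z)
    (heq : x ^ n + y ^ n = z ^ n)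
    (habc : z ^ n ≤ (x * y * z) ^ 2) : n ≤ 5 := by
  have hxz' : x < z := by
    have : x ^ n < z ^ n := by
      have : 0 < y ^ n := Nat.pow_pos hy
      omega
    exact lt_of_pow_lt_pow_left₀ n (Nat.zero_le z) this
  have hyz' : y < z := by
    have : y ^ n < z ^ n := by
      have : 0 < x ^ n := Nat.pow_pos (by omega)
      omega
    exact lt_of_pow_lt_pow_left₀ n (Nat.zero_le z) this
  have hlt : x * y * z < z * z * z :=
    Nat.mul_lt_mul_of_lt_of_le (Nat.mul_lt_mul_of_lt_of_lt hxz' hyz') (le_refl z) (by omega)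
  have h6 : z ^ n < z ^ 6 := by
    calc z ^ n ≤ (x * y * z) ^ 2 := habc
    _ < (z * z * z) ^ 2 := by
        apply Nat.pow_lt_pow_left hlt (by norm_num)
    _ = z ^ 6 := by ring
  have := (Nat.pow_lt_pow_iff_right hz).mp h6
  omega
end

section
/- Let p_n/q_n be the convergents of the regular continued fraction of ∛2, with partial quotients b_n and d_n = 2·q_n^3 − p_n^3. If b_{n+1} < 3·p_n^2/(q_n·|d_n|), and d_n > 0, and b_{n+1} > 6, then p_n^3 > 2·p_n·q_n·d_n, i.e., the resulting equation d_n + p_n^3 = 2·q_n^3 is an ABC hit with respect to the 2nd quality. -/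
/-- ABC-hit criterion for the 2nd quality of ∛2: if the next partial quotient
exceeds 6 then the resulting equation d + p³ = 2q³ is a 2nd-quality ABC hit. -/
theorem secondQuality_hit_of_large_partial_quotient (p q b : ℕ) (d : ℤ)
    (hp : 0 < p) (hq : 0 < q)
    (hd : d = 2 * (q : ℤ) ^ 3 - (p : ℤ) ^ 3) (hdpos : 0 < d)
    (hb : (b : ℝ) < 3 * (p : ℝ) ^ 2 / ((q : ℝ) * |(d : ℝ)|))
    (hb6 : 6 < b) :
    (p : ℝ) ^ 3 > 2 * (p : ℝ) * (q : ℝ) * (d : ℝ) := by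
  have hdR : (0:ℝ) < (d : ℝ) := by exact_mod_cast hdpos
  have hqR : (0:ℝ) < (q : ℝ) := by exact_mod_cast hq
  have hpR : (0:ℝ) < (p : ℝ) := by exact_mod_cast hp
  rw [abs_of_pos hdR] at hb
  have hb7 : (7:ℝ) ≤ (b : ℝ) := by exact_mod_cast hb6
  have h : (7:ℝ) < 3 * (p : ℝ) ^ 2 / ((q : ℝ) * (d : ℝ)) := lt_of_le_of_lt hb7 hb
  rw [lt_div_iff₀ (by positivity)] at h
  nlinarith
end

section
/- Suppose the partial quotients b_n of the continued fraction of ∛2 are bounded by K. Then there exists a constant L > 0 such that for all n, the resulting equation with a = |d_n|, b and c among {p_n^3, 2·q_n^3}, satisfies c-side ≤ L · (|d_n| · p_n · q_n · 2), i.e., max(p_n^3, 2·q_n^3) < 2·L·p_n·q_n·|d_n|. -/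
/-- If the partial quotients of ∛2 are bounded by K, then WNEABC with ε = 0 holds
for the resulting equations: max(p_n³, 2q_n³) < 2·L·p_n·q_n·|d_n| for some L > 0. -/
theorem wneabc_eps_zero_of_bounded_partial_quotients
    (p q b : ℕ → ℕ) (d : ℕ → ℤ)
    (hp : ∀ n, 0 < p n) (hq : ∀ n, 0 < q n)
    (hd : ∀ n, d n = 2 * (q n : ℤ) ^ 3 - (p n : ℤ) ^ 3)
    (hd0 : ∀ n, d n ≠ 0)
    (hconv : Filter.Tendsto (fun n => (p n : ℝ) / (q n : ℝ)) Filter.atTop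
      (nhds ((2 : ℝ) ^ ((1 : ℝ) / 3))))
    (hqtop : Filter.Tendsto q Filter.atTop Filter.atTop)
    (hbvdp : ∀ n, 3 * (p n : ℝ) ^ 2 / ((q n : ℝ) * |(d n : ℝ)|) ≤ (b (n + 1) : ℝ) + 2)
    (K : ℕ) (hK : ∀ n, b n ≤ K) :
    ∃ L > (0 : ℝ), ∀ n,
      max ((p n : ℝ) ^ 3) (2 * (q n : ℝ) ^ 3) <
        2 * L * (p n : ℝ) * (q n : ℝ) * |(d n : ℝ)| := by
  refine ⟨((K : ℝ) + 2) / 3 + 2, by positivity, fun n => ?_⟩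
  have hp1 : (1 : ℝ) ≤ (p n : ℝ) := by exact_mod_cast hp n
  have hq1 : (1 : ℝ) ≤ (q n : ℝ) := by exact_mod_cast hq n
  have hd1 : (1 : ℝ) ≤ |(d n : ℝ)| := by
    have h : (1 : ℤ) ≤ |d n| := Int.one_le_abs (by simpa using hd0 n)
    calc (1 : ℝ) = ((1 : ℤ) : ℝ) := by norm_num
      _ ≤ ((|d n| : ℤ) : ℝ) := by exact_mod_cast h
      _ = |(d n : ℝ)| := by push_cast; ring
  have hbd : 3 * (p n : ℝ) ^ 2 ≤ ((K : ℝ) + 2) * ((q n : ℝ) * |(d n : ℝ)|) := by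
    have h := hbvdp n
    have hK' : ((b (n + 1) : ℝ) + 2) ≤ (K : ℝ) + 2 := by
      have := hK (n + 1); have : ((b (n+1) : ℝ)) ≤ (K : ℝ) := by exact_mod_cast this
      linarith
    have hpos : (0 : ℝ) < (q n : ℝ) * |(d n : ℝ)| := by nlinarith
    rw [div_le_iff₀ hpos] at h
    nlinarith [mul_le_mul_of_nonneg_right hK' hpos.le]
  have hP : (p n : ℝ) ^ 3 ≤ ((K : ℝ) + 2) / 3 * ((p n : ℝ) * (q n : ℝ) * |(d n : ℝ)|) := by
    nlinarith [mul_le_mul_of_nonneg_left hbd (le_trans zero_le_one hp1)]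
  have hdeq : (d n : ℝ) = 2 * (q n : ℝ) ^ 3 - (p n : ℝ) ^ 3 := by
    have := hd n; exact_mod_cast congrArg (fun z : ℤ => (z : ℝ)) this
  have habs : (d n : ℝ) ≤ |(d n : ℝ)| := le_abs_self _
  have hpq : (1 : ℝ) ≤ (p n : ℝ) * (q n : ℝ) := by nlinarith
  have hdX : |(d n : ℝ)| ≤ (p n : ℝ) * (q n : ℝ) * |(d n : ℝ)| := by
    have := mul_le_mul_of_nonneg_right hpq (abs_nonneg ((d n : ℝ)))
    linarith
  have hX1 : (1 : ℝ) ≤ (p n : ℝ) * (q n : ℝ) * |(d n : ℝ)| := le_trans hd1 hdX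
  have hQ : 2 * (q n : ℝ) ^ 3 ≤
      (((K : ℝ) + 2) / 3 + 1) * ((p n : ℝ) * (q n : ℝ) * |(d n : ℝ)|) := by
    nlinarith [hdX]
  rw [max_lt_iff]
  constructor <;> nlinarith [hX1, hP, hQ, Nat.cast_nonneg (α := ℝ) K]
end
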